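/- Greedy optimality: with n agents having reduction rates λ_i ≥ 0 and integer budget b, the allocation produced by repeatedly assigning one unit of budget to the agent with the maximal current marginal jump Δ_i^{c_i+1} = e^{-λ_i c_i} - e^{-λ_i (c_i+1)} yields an allocation maximizing Σ_i (1 - e^{-λ_i c_i}) subject to Σ_i c_i ≤ b. -/

import Mathlib

noncomputable def jump (l : ℝ) (c : ℕ) : ℝ :=
  Real.exp (-l * c) - Real.exp (-l * (c + 1))

noncomputable def greedyMJS {n : ℕ} (lam : Fin n → ℝ) : ℕ → (Fin n → ℕ)
  | 0 => fun _ => 0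
  | b + 1 =>
    let c := greedyMJS lam b
    if h : ∃ l : Fin n, ∀ i : Fin n, jump (lam i) (c i) ≤ jump (lam l) (c l) then
      Function.update c h.choose (c h.choose + 1)
    else c

/-!
The objective is a sum over agents of concave gains `1 - exp (-λ c)`, whose marginal gains are
the jumps. By induction on the budget, the greedy allocation is optimal: an allocation `c` of
budget `b + 1` either fits under the greedy allocation `g` of budget `b`, or exceeds it at some
agent `i`; withdrawing one unit from `i` leaves an allocation of budget `b`, worth at most `g`,
and the withdrawn unit is worth at most the jump of `i` at `g i` (concavity), hence at most the
greedy jump.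
-/

open Finset Function

section Exchange

variable {ι : Type*} [Fintype ι]

theorem sum_apply_update_add {M : Type*} [AddCommMonoid M] [DecidableEq ι] (φ : ι → ℕ → M)
    (g : ι → ℕ) (l : ι) (v : ℕ) :
    ∑ i, φ i (update g l v i) + φ l (g l) = ∑ i, φ i (g i) + φ l v := by
  have hupd : ∀ f : ι → ℕ, ∑ i, φ i (f i) = φ l (f l) + ∑ i ∈ univ.erase l, φ i (f i) :=
    fun f => (add_sum_erase _ _ (mem_univ l)).symm
  have herase : ∑ i ∈ univ.erase l, φ i (update g l v i) = ∑ i ∈ univ.erase l, φ i (g i) :=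
    sum_congr rfl fun i hi => by rw [update_of_ne (ne_of_mem_erase hi)]
  rw [hupd (update g l v), hupd g, herase, update_self]
  abel

def IsOptimalAllocation (u : ι → ℕ → ℝ) (b : ℕ) (g : ι → ℕ) : Prop :=
  ∑ i, g i ≤ b ∧ ∀ c : ι → ℕ, ∑ i, c i ≤ b → ∑ i, u i (c i) ≤ ∑ i, u i (g i)

theorem isOptimalAllocation_zero (u : ι → ℕ → ℝ) : IsOptimalAllocation u 0 0 := by
  refine ⟨by simp, fun c hc => ?_⟩
  have hc0 : c = 0 := funext fun i => by simpa using (sum_eq_zero_iff.1 (Nat.le_zero.1 hc)) i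
  rw [hc0]

theorem IsOptimalAllocation.of_isEmpty [IsEmpty ι] (u : ι → ℕ → ℝ) (b : ℕ) (g : ι → ℕ) :
    IsOptimalAllocation u b g := by
  simp [IsOptimalAllocation]

theorem IsOptimalAllocation.update_succ [DecidableEq ι] {u : ι → ℕ → ℝ}
    (hmono : ∀ i, Monotone (u i)) (hconc : ∀ i, Antitone fun k => u i (k + 1) - u i k)
    {b : ℕ} {g : ι → ℕ} (hg : IsOptimalAllocation u b g) {l : ι}
    (hl : ∀ i, u i (g i + 1) - u i (g i) ≤ u l (g l + 1) - u l (g l)) :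
    IsOptimalAllocation u (b + 1) (update g l (g l + 1)) := by
  have hcard := sum_apply_update_add (fun _ => id) g l (g l + 1)
  have hgain := sum_apply_update_add u g l (g l + 1)
  simp only [id] at hcard
  refine ⟨by linarith [hg.1], fun c hc => ?_⟩
  by_cases hle : ∀ i, c i ≤ g i
  · have := hg.2 c ((sum_le_sum fun i _ => hle i).trans hg.1)
    linarith [hmono l (Nat.le_succ (g l))]
  · obtain ⟨i, hi⟩ := not_forall.1 hle
    obtain ⟨k, hk⟩ := Nat.exists_eq_add_of_lt (not_le.1 hi)
    have hcard' := sum_apply_update_add (fun _ => id) c i (g i + k)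
    have hgain' := sum_apply_update_add u c i (g i + k)
    simp only [id] at hcard'
    have hopt := hg.2 (update c i (g i + k)) (by omega)
    have hdecr : u i (g i + k + 1) - u i (g i + k) ≤ u i (g i + 1) - u i (g i) :=
      hconc i (Nat.le_add_right _ _)
    rw [hk] at hgain'
    linarith [hl i]

end Exchange

noncomputable def expGain (l : ℝ) (c : ℕ) : ℝ :=
  1 - Real.exp (-l * c)

theorem expGain_succ_sub (l : ℝ) (c : ℕ) : expGain l (c + 1) - expGain l c = jump l c := by
  simp only [expGain, jump]
  push_cast
  ring

theorem jump_succ (l : ℝ) (c : ℕ) : jump l (c + 1) = Real.exp (-l) * jump l c := by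
  simp only [jump, mul_sub, ← Real.exp_add]
  push_cast
  ring_nf

theorem jump_nonneg {l : ℝ} (hl : 0 ≤ l) (c : ℕ) : 0 ≤ jump l c :=
  sub_nonneg.2 (Real.exp_le_exp.2 (by nlinarith))

theorem jump_antitone {l : ℝ} (hl : 0 ≤ l) : Antitone (jump l) :=
  antitone_nat_of_succ_le fun c => by
    rw [jump_succ]
    exact mul_le_of_le_one_left (jump_nonneg hl c) (Real.exp_le_one_iff.2 (by linarith))

theorem expGain_monotone {l : ℝ} (hl : 0 ≤ l) : Monotone (expGain l) :=
  monotone_nat_of_le_succ fun c => sub_nonneg.1 ((expGain_succ_sub l c).symm ▸ jump_nonneg hl c)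

theorem greedyMJS_isOptimalAllocation {n : ℕ} (lam : Fin n → ℝ) (hlam : ∀ i, 0 ≤ lam i)
    (b : ℕ) : IsOptimalAllocation (fun i => expGain (lam i)) b (greedyMJS lam b) := by
  induction b with
  | zero => exact isOptimalAllocation_zero _
  | succ b ih =>
    rw [greedyMJS]
    split_ifs with hmax
    · refine ih.update_succ (fun i => expGain_monotone (hlam i)) (fun i => ?_) fun i => ?_
      · simpa only [expGain_succ_sub] using jump_antitone (hlam i)
      · simpa only [expGain_succ_sub] using hmax.choose_spec i
    · have : IsEmpty (Fin n) := not_nonempty_iff.1 fun _ => hmax (Finite.exists_max _)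
      exact IsOptimalAllocation.of_isEmpty _ _ _

theorem greedy_optimal {n : ℕ} (lam : Fin n → ℝ) (hlam : ∀ i, 0 ≤ lam i) (b : ℕ) :
    (∑ i, greedyMJS lam b i ≤ b) ∧
    ∀ c : Fin n → ℕ, (∑ i, c i ≤ b) →
      ∑ i, (1 - Real.exp (-lam i * c i)) ≤
        ∑ i, (1 - Real.exp (-lam i * greedyMJS lam b i)) :=
  greedyMJS_isOptimalAllocation lam hlam b
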